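/- arXiv:2206.03133 — 6 statements merged into one kernel-verified Lean document; each statement's English description precedes it below -/
import Mathlib

section
/- Let b, c > 0 with B = c·exp(b) > 1, and let k(x) = sqrt(c²·exp(−2x) − (x+b)²) on the set where the radicand is positive. Then for every x < x_M with k(x) > 0, the derivative k'(x) is negative. -/
/-! Writing `A = c² e^{-2x}` and `u = x + b`, the radicand `A - u²` has derivative `-2 (A + u)`,
so `k' = -(A + u) / k` and it suffices that `A + u > 0`. This is clear for `u ≥ 0`; for `u < 0`
we have `A > c² e^{2b} = B² > 1` and `A > u²`, and `max 1 u² ≥ |u|`. -/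

open Real Filter Topology

theorem neg_lt_of_sq_lt_of_one_lt {u A : ℝ} (hsq : u ^ 2 < A) (hone : 1 < A) : -u < A := by
  rcases le_or_gt (|u|) 1 with hu | hu
  · linarith [neg_le_abs u]
  · nlinarith [neg_le_abs u, sq_abs u]

theorem hasDerivAt_sq_mul_exp_sub_sq (b c x : ℝ) :
    HasDerivAt (fun y => c ^ 2 * exp (-2 * y) - (y + b) ^ 2)
      (-2 * (c ^ 2 * exp (-2 * x) + (x + b))) x := by
  have hexp : HasDerivAt (fun y => exp (-2 * y)) (exp (-2 * x) * -2) x := by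
    simpa using ((hasDerivAt_id x).const_mul (-2)).exp
  have hsq : HasDerivAt (fun y => (y + b) ^ 2) (2 * (x + b)) x := by
    simpa using ((hasDerivAt_id x).add_const b).fun_pow 2
  exact ((hexp.const_mul (c ^ 2)).sub hsq).congr_deriv (by ring)

theorem one_lt_sq_mul_exp_of_add_neg {b c x : ℝ} (hB : 1 < c * exp b) (hx : x + b < 0) :
    1 < c ^ 2 * exp (-2 * x) :=
  calc 1 < (c * exp b) ^ 2 := one_lt_pow₀ hB two_ne_zero
    _ = c ^ 2 * exp (2 * b) := by rw [mul_pow, ← exp_nat_mul]; norm_num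
    _ < c ^ 2 * exp (-2 * x) := by
      have hc : 0 < c ^ 2 := pow_pos (pos_of_mul_pos_left (one_pos.trans hB) (exp_pos b).le) 2
      exact mul_lt_mul_of_pos_left (exp_lt_exp.mpr (by linarith)) hc

theorem sq_mul_exp_add_pos {b c x : ℝ} (hB : 1 < c * exp b)
    (hrad : 0 < c ^ 2 * exp (-2 * x) - (x + b) ^ 2) :
    0 < c ^ 2 * exp (-2 * x) + (x + b) := by
  rcases le_or_gt 0 (x + b) with hu | hu
  · have : 0 < c ^ 2 * exp (-2 * x) := by nlinarith
    linarith
  · have hsq : (x + b) ^ 2 < c ^ 2 * exp (-2 * x) := by linarith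
    linarith [neg_lt_of_sq_lt_of_one_lt hsq (one_lt_sq_mul_exp_of_add_neg hB hu)]

theorem stmt_5_general (b c uM : ℝ)
    (hB : c * Real.exp b > 1)
    (k : ℝ → ℝ)
    (hk : ∀ x : ℝ, x ≤ uM - b →
      k x = Real.sqrt (c ^ 2 * Real.exp (-2 * x) - (x + b) ^ 2)) :
    ∀ x : ℝ, x < uM - b → k x > 0 → deriv k x < 0 := by
  intro x hx hkx
  have hrad : 0 < c ^ 2 * exp (-2 * x) - (x + b) ^ 2 := by
    rw [hk x hx.le] at hkx
    exact sqrt_pos.mp hkx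
  have hk_nhds : k =ᶠ[𝓝 x] fun y => √(c ^ 2 * exp (-2 * y) - (y + b) ^ 2) := by
    filter_upwards [Iio_mem_nhds hx] with y hy
    exact hk y hy.le
  rw [hk_nhds.deriv_eq, ((hasDerivAt_sq_mul_exp_sub_sq b c x).sqrt hrad.ne').deriv]
  have hsum := sq_mul_exp_add_pos hB hrad
  exact div_neg_of_neg_of_pos (by linarith) (by positivity)

theorem stmt_5 (b c uM : ℝ) (hb : 0 < b) (hc : 0 < c)
    (hB : c * Real.exp b > 1)
    (huM : 0 < uM) (hroot : (c * Real.exp b) * Real.exp (-uM) = uM)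
    (k : ℝ → ℝ)
    (hk : ∀ x : ℝ, x ≤ uM - b →
      k x = Real.sqrt (c ^ 2 * Real.exp (-2 * x) - (x + b) ^ 2)) :
    ∀ x : ℝ, x < uM - b → k x > 0 → deriv k x < 0 :=
  stmt_5_general b c uM hB k hk
end

section
/- Let b, c > 0, B = c·exp(b), and suppose B > 1. Let s_n = x_n + i y_n be a zero of h(s) = s + b + c·exp(−s) with y_n > 0 and x_n + b < 0, and suppose y_n lies between nπ and (n+1)π for some integer n ≥ 1. Then ln(exp(−(b+1))/((n+1)π)) < x_n < ln(c/(nπ)). -/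
open Complex Real
set_option maxHeartbeats 800000 in
theorem stmt_10 (b c x y : ℝ) (n : ℕ) (hb : 0 < b) (hc : 0 < c)
    (hB : c * Real.exp b > 1) (hn : 1 ≤ n)
    (hzero : (x + y * Complex.I) + (b : ℂ) + (c : ℂ) * Complex.exp (-(x + y * Complex.I)) = 0)
    (hy : 0 < y) (hx : x + b < 0)
    (hlo : (n : ℝ) * Real.pi < y) (hhi : y < ((n : ℝ) + 1) * Real.pi) :
    Real.log (Real.exp (-(b + 1)) / (((n : ℝ) + 1) * Real.pi)) < x ∧
      x < Real.log (c / ((n : ℝ) * Real.pi)) := by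
  have hre := congrArg Complex.re hzero
  have him := congrArg Complex.im hzero
  simp [Complex.exp_re, Complex.exp_im, Complex.add_re, Complex.add_im, Complex.mul_re,
    Complex.mul_im, Real.cos_neg, Real.sin_neg] at hre him
  have h1 : x + b + c * Real.exp (-x) * Real.cos y = 0 := by nlinarith [hre, him]
  have h2 : c * Real.exp (-x) * Real.sin y = y := by nlinarith [hre, him]
  have hE : 0 < Real.exp (-x) := Real.exp_pos _
  have hsin : 0 < Real.sin y := by
    rcases lt_trichotomy (Real.sin y) 0 with h | h | h
    · have := mul_neg_of_pos_of_neg (mul_pos hc hE) h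
      nlinarith
    · rw [h] at h2; nlinarith
    · exact h
  have hex : Real.exp x * y = c * Real.sin y := by
    have he : Real.exp x * Real.exp (-x) = 1 := by
      rw [← Real.exp_add]; simp
    nlinarith [h2]
  have hnpos : (0:ℝ) < (n:ℝ) * Real.pi := by
    have : (1:ℝ) ≤ (n:ℝ) := by exact_mod_cast hn
    nlinarith [Real.pi_pos]
  have hn1pos : (0:ℝ) < ((n:ℝ)+1) * Real.pi := by nlinarith [Real.pi_pos]
  set u : ℝ := -(x + b) with hu
  have hupos : 0 < u := by rw [hu]; linarith
  have hEx : Real.exp (-x) = Real.exp u * Real.exp b := by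
    rw [← Real.exp_add]; congr 1; rw [hu]; ring
  have hinv : Real.exp (-u) * Real.exp u = 1 := by rw [← Real.exp_add]; simp
  have h1' : c * (Real.exp u * Real.exp b) * Real.cos y = u := by
    rw [← hEx]; rw [hu]; linarith [h1]
  have hcbpos : (0:ℝ) < c * Real.exp b := by positivity
  have hcos : Real.cos y = u * Real.exp (-u) / (c * Real.exp b) := by
    rw [eq_div_iff (ne_of_gt hcbpos)]
    linear_combination Real.exp (-u) * h1' - (c * Real.exp b * Real.cos y) * hinv
  have hue : u * Real.exp (-u) ≤ Real.exp (-1) := by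
    have h3 : u ≤ Real.exp (u - 1) := by
      have := Real.add_one_le_exp (u - 1); linarith
    have h4 : Real.exp (u-1) * Real.exp (-u) = Real.exp (-1) := by
      rw [← Real.exp_add]; ring_nf
    nlinarith [Real.exp_pos (-u)]
  set t : ℝ := Real.exp (-(b+1)) / c with ht
  have htpos : 0 < t := div_pos (Real.exp_pos _) hc
  have htB : t = Real.exp (-1) / (c * Real.exp b) := by
    rw [ht, show (-(b+1) : ℝ) = -1 + -b by ring, Real.exp_add, Real.exp_neg b]
    field_simp
  have hcost : Real.cos y ≤ t := by
    rw [hcos, htB]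
    gcongr
  have hcosnn : 0 ≤ Real.cos y := by
    rw [hcos]; positivity
  have hte : t < Real.exp (-1) := by
    rw [htB, div_lt_iff₀ hcbpos]
    nlinarith [Real.exp_pos (-1)]
  have ht2 : t^2 < 1/2 := by
    have he1 : Real.exp (-1) < 1/2 := by
      rw [Real.exp_neg, inv_lt_comm₀ (Real.exp_pos 1) (by norm_num)]
      calc (1/2 : ℝ)⁻¹ = 2 := by norm_num
      _ < Real.exp 1 := by nlinarith [Real.add_one_lt_exp (one_ne_zero : (1:ℝ) ≠ 0)]
    nlinarith
  have hsin2 : Real.sin y ^ 2 = 1 - Real.cos y ^ 2 := by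
    nlinarith [Real.sin_sq_add_cos_sq y]
  have hsint : t < Real.sin y := by
    nlinarith [hsin2, ht2, htpos, hsin, mul_self_le_mul_self hcosnn hcost]
  constructor
  · rw [← Real.log_exp x]
    apply Real.log_lt_log (by positivity)
    rw [div_lt_iff₀ hn1pos]
    calc Real.exp (-(b+1)) = c * t := by rw [ht, mul_div_cancel₀ _ (ne_of_gt hc)]
    _ < c * Real.sin y := by gcongr
    _ = Real.exp x * y := hex.symm
    _ < Real.exp x * (((n:ℝ)+1) * Real.pi) := (mul_lt_mul_iff_right₀ (Real.exp_pos x)).mpr hhi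
  · rw [← Real.log_exp x]
    apply Real.log_lt_log (Real.exp_pos x)
    rw [lt_div_iff₀ hnpos]
    calc Real.exp x * ((n:ℝ) * Real.pi) < Real.exp x * y :=
      (mul_lt_mul_iff_right₀ (Real.exp_pos x)).mpr hlo
    _ = c * Real.sin y := hex
    _ ≤ c * 1 := mul_le_mul_of_nonneg_left (Real.sin_le_one y) hc.le
    _ = c := mul_one c
end

section
/- Let b, c > 0, B = c·exp(b), E² = 1 − B^{−2}e^{−1} with B > 1, and let s_n = x_n + i y_n be a zero of h(s) = s + b + c·exp(−s) with u_n := −(x_n + b) > 0 and y_n² = B²·exp(2u_n) − u_n². Then |1 + b + s_n| > c·E·exp(−x_n). -/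
/-!
Write `u = -(x + b)` and `B = c·exp b`, so that `c·exp(-x) = B·exp u`. With the given
value of `y²`, `|1 + b + s|² = (1 - u)² + y² = 1 - 2u + B²·exp(2u)`, while the square of the
right-hand side is `B²·exp(2u) - exp(2u - 1)`. Their difference `1 - 2u + exp(2u - 1)` is
positive because `exp(2u - 1) ≥ 2u`.
-/

lemma sq_mul_exp_mul_lt_one_sub_sq_add_sq {B u y : ℝ} (hB : B ≠ 0)
    (hy : y ^ 2 = B ^ 2 * Real.exp (2 * u) - u ^ 2) :
    B ^ 2 * Real.exp (2 * u) * (1 - B⁻¹ ^ 2 * Real.exp (-1)) < (1 - u) ^ 2 + y ^ 2 := by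
  have hexp : Real.exp (2 * u) * Real.exp (-1) = Real.exp (2 * u - 1) := by
    rw [← Real.exp_add, sub_eq_add_neg]
  calc B ^ 2 * Real.exp (2 * u) * (1 - B⁻¹ ^ 2 * Real.exp (-1))
      = B ^ 2 * Real.exp (2 * u) - Real.exp (2 * u - 1) := by
        rw [← hexp]; field_simp
    _ < B ^ 2 * Real.exp (2 * u) + 1 - 2 * u := by linarith [Real.add_one_le_exp (2 * u - 1)]
    _ = (1 - u) ^ 2 + y ^ 2 := by rw [hy]; ring

lemma norm_one_add_add_mul_I_sq (b x y : ℝ) :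
    ‖1 + (b : ℂ) + (x + y * Complex.I)‖ ^ 2 = (1 + b + x) ^ 2 + y ^ 2 := by
  have : 1 + (b : ℂ) + (x + y * Complex.I) = ((1 + b + x : ℝ) : ℂ) + y * Complex.I := by
    push_cast; ring
  rw [this, Complex.sq_norm, Complex.normSq_add_mul_I]

theorem stmt_13_general (b c x y : ℝ)
    (hB : c * Real.exp b > 1)
    (hy2 : y ^ 2 = (c * Real.exp b) ^ 2 * Real.exp (2 * (-(x + b))) - (-(x + b)) ^ 2) :
    ‖1 + (b : ℂ) + (x + y * Complex.I)‖ >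
      c * Real.sqrt (1 - (c * Real.exp b)⁻¹ ^ 2 * Real.exp (-1)) * Real.exp (-x) := by
  have hE : 0 ≤ 1 - (c * Real.exp b)⁻¹ ^ 2 * Real.exp (-1) := by
    refine sub_nonneg.mpr (mul_le_one₀ ?_ (Real.exp_pos _).le ?_)
    · exact pow_le_one₀ (by positivity) (inv_le_one_of_one_le₀ hB.le)
    · exact Real.exp_le_one_iff.mpr (by norm_num)
  have hrhs : (c * Real.sqrt (1 - (c * Real.exp b)⁻¹ ^ 2 * Real.exp (-1)) * Real.exp (-x)) ^ 2
      = (c * Real.exp b) ^ 2 * Real.exp (2 * (-(x + b)))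
          * (1 - (c * Real.exp b)⁻¹ ^ 2 * Real.exp (-1)) := by
    have hexp : Real.exp (-x) ^ 2 = Real.exp b ^ 2 * Real.exp (2 * (-(x + b))) := by
      rw [← Real.exp_nat_mul, ← Real.exp_nat_mul, ← Real.exp_add]; push_cast; ring_nf
    rw [mul_pow, mul_pow, Real.sq_sqrt hE, hexp]
    ring
  refine lt_of_pow_lt_pow_left₀ 2 (norm_nonneg _) ?_
  rw [hrhs, norm_one_add_add_mul_I_sq, show 1 + b + x = 1 - -(x + b) by ring]
  exact sq_mul_exp_mul_lt_one_sub_sq_add_sq (by positivity) hy2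

theorem stmt_13 (b c x y : ℝ) (hb : 0 < b) (hc : 0 < c)
    (hB : c * Real.exp b > 1)
    (hzero : (x + y * Complex.I) + (b : ℂ) + (c : ℂ) * Complex.exp (-(x + y * Complex.I)) = 0)
    (hu : 0 < -(x + b))
    (hy2 : y ^ 2 = (c * Real.exp b) ^ 2 * Real.exp (2 * (-(x + b))) - (-(x + b)) ^ 2) :
    ‖1 + (b : ℂ) + (x + y * Complex.I)‖ >
      c * Real.sqrt (1 - (c * Real.exp b)⁻¹ ^ 2 * Real.exp (-1)) * Real.exp (-x) :=
  stmt_13_general b c x y hB hy2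
end

section
/- Positivity of solutions: let β̃ > 0, β*, γ* > 0 with β* + γ* = 1, and let φ : [−1,0] → ℝ be continuous and strictly positive. If f : [−1,∞) → ℝ is continuous, differentiable on (0,∞), satisfies f'(t) = β̃·f(t)·(1 − β*·f(t) − γ*·f(t−1)) for t > 0 and f = φ on [−1,0], then f(t) > 0 for all t ≥ 0. -/
/-!
Although nonlinear, the equation is linear in `f` once the rate
`g s = β̃ (1 - β* f s - γ* f (s - 1))` is regarded as a given continuous function on `[0, t]`.
The integrating factor `exp (-∫₀ˢ g)` then yields `f t = f 0 * exp (∫₀ᵗ g)`,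
which is positive because `f 0 = φ 0 > 0`.
-/

open Real Set

theorem eq_mul_exp_integral_of_hasDerivAt_mul {f g : ℝ → ℝ} {a b : ℝ} (hab : a ≤ b)
    (hf : ContinuousOn f (Icc a b)) (hg : ContinuousOn g (Icc a b))
    (hderiv : ∀ s ∈ Ioo a b, HasDerivAt f (g s * f s) s) :
    f b = f a * exp (∫ s in a..b, g s) := by
  set G : ℝ → ℝ := fun u => ∫ s in a..u, g s
  have hG_cont : ContinuousOn G (Icc a b) := by
    rw [← uIcc_of_le hab] at hg ⊢
    exact intervalIntegral.continuousOn_primitive_interval (hg.integrableOn_compact isCompact_uIcc)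
  have hG_deriv (s : ℝ) (hs : s ∈ Ioo a b) : HasDerivAt G (g s) s :=
    intervalIntegral.integral_hasDerivAt_right
      ((hg.mono (Icc_subset_Icc_right hs.2.le)).intervalIntegrable_of_Icc hs.1.le)
      ((hg.mono Ioo_subset_Icc_self).stronglyMeasurableAtFilter isOpen_Ioo s hs)
      (hg.continuousAt (Icc_mem_nhds hs.1 hs.2))
  have hF_deriv (s : ℝ) (hs : s ∈ Ioo a b) :
      HasDerivAt (fun u => f u * exp (-G u)) 0 s := by
    refine ((hderiv s hs).mul (hG_deriv s hs).neg.exp).congr_deriv ?_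
    simp only [Pi.neg_apply]
    ring
  have hF_const := intervalIntegral.integral_eq_sub_of_hasDerivAt_of_le
    (f := fun u => f u * exp (-G u)) hab
    (hf.mul (continuous_exp.comp_continuousOn hG_cont.neg)) hF_deriv intervalIntegrable_const
  have hGa : G a = 0 := intervalIntegral.integral_same
  rw [intervalIntegral.integral_zero, hGa, neg_zero, exp_zero, mul_one, eq_comm, sub_eq_zero]
    at hF_const
  rw [← hF_const, mul_assoc, ← exp_add, neg_add_cancel, exp_zero, mul_one]

theorem stmt_16_general (βt βs γs : ℝ)
    (φ f : ℝ → ℝ)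
    (hφpos : ∀ t ∈ Set.Icc (-1 : ℝ) 0, 0 < φ t)
    (hfcont : ContinuousOn f (Set.Ici (-1 : ℝ)))
    (hde : ∀ t : ℝ, 0 < t →
      HasDerivAt f (βt * f t * (1 - βs * f t - γs * f (t - 1))) t)
    (hinit : ∀ t ∈ Set.Icc (-1 : ℝ) 0, f t = φ t) :
    ∀ t : ℝ, 0 ≤ t → 0 < f t := by
  intro t ht
  have hf0 : 0 < f 0 := hinit 0 (by norm_num) ▸ hφpos 0 (by norm_num)
  have hf : ContinuousOn f (Icc 0 t) :=
    hfcont.mono fun s hs => mem_Ici.2 (by linarith [hs.1])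
  have hf_delay : ContinuousOn (fun s => f (s - 1)) (Icc 0 t) :=
    hfcont.comp (continuousOn_id.sub continuousOn_const)
      fun s hs => mem_Ici.2 (by linarith [hs.1])
  have hrate : ContinuousOn (fun s => βt * (1 - βs * f s - γs * f (s - 1))) (Icc 0 t) :=
    continuousOn_const.mul ((continuousOn_const.sub (continuousOn_const.mul hf)).sub
      (continuousOn_const.mul hf_delay))
  rw [eq_mul_exp_integral_of_hasDerivAt_mul ht hf hrate
    fun s hs => (hde s hs.1).congr_deriv (by ring)]
  positivity

theorem stmt_16 (βt βs γs : ℝ) (hβt : 0 < βt) (hβs : 0 < βs) (hγs : 0 < γs)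
    (hsum : βs + γs = 1)
    (φ f : ℝ → ℝ)
    (hφcont : ContinuousOn φ (Set.Icc (-1 : ℝ) 0))
    (hφpos : ∀ t ∈ Set.Icc (-1 : ℝ) 0, 0 < φ t)
    (hfcont : ContinuousOn f (Set.Ici (-1 : ℝ)))
    (hde : ∀ t : ℝ, 0 < t →
      HasDerivAt f (βt * f t * (1 - βs * f t - γs * f (t - 1))) t)
    (hinit : ∀ t ∈ Set.Icc (-1 : ℝ) 0, f t = φ t) :
    ∀ t : ℝ, 0 ≤ t → 0 < f t :=
  stmt_16_general βt βs γs φ f hφpos hfcont hde hinit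
end

section
/- Upper bound for solutions: under the hypotheses of the positivity theorem (f' (t) = β̃·f(t)·(1 − β*·f(t) − γ*·f(t−1)) for t > 0, f = φ > 0 continuous on [−1,0], β* + γ* = 1, β*, γ*, β̃ > 0), the solution satisfies for all t > 0: 0 < f(t) < f₀ / (β*·f₀ + (1 − β*·f₀)·exp(−β̃·t)), where f₀ = f(0). In particular f(t) < max{f₀, 1/β*}. -/
/-!
Positivity is inherited from the linear equation `f' = g f` with `g` continuous: a first zero
of `f` would force `f ≡ 0` by uniqueness of solutions. Given positivity, `u = 1/f - β*` satisfies
`u' = -β̃ u + β̃ γ* f(t - 1) / f(t) > -β̃ u`, so `u(t) e^{β̃ t}` is strictly increasing, i.e.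
`1/f(t) > β* + (1/f₀ - β*) e^{-β̃ t}`. The final bound holds because the denominator
`β* f₀ + (1 - β* f₀) e^{-β̃ t}` is a convex combination of `β* f₀` and `1`.
-/

open Real Set

theorem eqOn_zero_of_hasDerivWithinAt_mul_self_of_eq_zero_right {f g : ℝ → ℝ} {a b : ℝ}
    (hf : ContinuousOn f (Icc a b)) (hg : ContinuousOn g (Icc a b))
    (hderiv : ∀ t ∈ Ioc a b, HasDerivWithinAt f (g t * f t) (Iic t) t) (hb : f b = 0) :
    EqOn f 0 (Icc a b) := by
  obtain ⟨C, hC⟩ := isCompact_Icc.exists_bound_of_continuousOn hg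
  have hlip (t : ℝ) (ht : t ∈ Ioc a b) : LipschitzOnWith C.toNNReal (g t * ·) univ := by
    refine ((lipschitzWith_smul (g t)).weaken ?_).lipschitzOnWith
    simpa [← norm_toNNReal] using Real.toNNReal_le_toNNReal (hC t (Ioc_subset_Icc_self ht))
  refine ODE_solution_unique_of_mem_Icc_left hlip hf hderiv (fun _ _ => mem_univ _)
    continuousOn_const (fun t _ => ?_) (fun _ _ => mem_univ _) hb
  exact (hasDerivWithinAt_const t (Iic t) (0 : ℝ)).congr_deriv (by simp)

theorem pos_of_hasDerivAt_mul_self {f g : ℝ → ℝ} {a b : ℝ}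
    (hf : ContinuousOn f (Icc a b)) (hg : ContinuousOn g (Icc a b)) (ha : 0 < f a)
    (hderiv : ∀ t ∈ Ioc a b, HasDerivAt f (g t * f t) t) :
    ∀ t ∈ Icc a b, 0 < f t := by
  intro t ht
  by_contra! hft
  obtain ⟨s, hs, hfs⟩ : ∃ s ∈ Icc a t, f s = 0 :=
    intermediate_value_Icc' ht.1 (hf.mono (Icc_subset_Icc_right ht.2)) ⟨hft, ha.le⟩
  have hsub : Icc a s ⊆ Icc a b := Icc_subset_Icc_right (hs.2.trans ht.2)
  have := eqOn_zero_of_hasDerivWithinAt_mul_self_of_eq_zero_right (hf.mono hsub) (hg.mono hsub)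
    (fun τ hτ => (hderiv τ (Ioc_subset_Ioc_right (hs.2.trans ht.2) hτ)).hasDerivWithinAt) hfs
    (left_mem_Icc.mpr hs.1)
  simp [this] at ha

theorem mul_exp_lt_of_hasDerivAt_gt {u u' : ℝ → ℝ} {a b c : ℝ} (hab : a < b)
    (hu : ContinuousOn u (Icc a b)) (hderiv : ∀ x ∈ Ioo a b, HasDerivAt u (u' x) x)
    (hgt : ∀ x ∈ Ioo a b, -c * u x < u' x) :
    u a * exp (-(c * (b - a))) < u b := by
  have hmono : StrictMonoOn (fun x => u x * exp (c * x)) (Icc a b) := by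
    refine strictMonoOn_of_deriv_pos (convex_Icc a b)
      (hu.mul (continuous_const.mul continuous_id).rexp.continuousOn) fun x hx => ?_
    rw [interior_Icc] at hx
    have hd : HasDerivAt (fun x => u x * exp (c * x))
        (exp (c * x) * (u' x + c * u x)) x :=
      ((hderiv x hx).mul ((hasDerivAt_id' x).const_mul c).exp).congr_deriv (by ring)
    rw [hd.deriv]
    exact mul_pos (exp_pos _) (by linarith [hgt x hx])
  have hends : u a * exp (c * a) < u b * exp (c * b) :=
    hmono (left_mem_Icc.mpr hab.le) (right_mem_Icc.mpr hab.le) hab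
  rwa [mul_sub, neg_sub, exp_sub, mul_div_assoc', div_lt_iff₀ (exp_pos _)]

theorem lt_div_of_inv_sub_gt {y y₀ β X : ℝ} (hy : 0 < y) (hy₀ : 0 < y₀) (hβ : 0 ≤ β)
    (hX₀ : 0 < X) (hX₁ : X ≤ 1) (h : (y₀⁻¹ - β) * X < y⁻¹ - β) :
    y < y₀ / (β * y₀ + (1 - β * y₀) * X) := by
  have hden : 0 < β * y₀ + (1 - β * y₀) * X := by
    nlinarith [mul_nonneg (mul_nonneg hβ hy₀.le) (sub_nonneg.mpr hX₁)]
  rw [lt_div_iff₀ hden]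
  have key : β * y₀ + (1 - β * y₀) * X = y₀ * (β + (y₀⁻¹ - β) * X) := by
    field_simp
  rw [key]
  calc y * (y₀ * (β + (y₀⁻¹ - β) * X)) < y * (y₀ * y⁻¹) := by gcongr; linarith
    _ = y₀ := by field_simp

theorem div_le_max_of_convex_combination {y β X : ℝ} (hy : 0 < y) (hβ : 0 < β)
    (hX₀ : 0 ≤ X) (hX₁ : X ≤ 1) :
    y / (β * y + (1 - β * y) * X) ≤ max y (1 / β) := by
  rcases le_total (β * y) 1 with h | h
  · refine (div_le_div_iff₀ (by nlinarith) hβ |>.mpr ?_).trans (le_max_right _ _)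
    nlinarith
  · refine (div_le_iff₀ (by nlinarith) |>.mpr ?_).trans (le_max_left _ _)
    nlinarith [mul_nonneg (mul_nonneg hy.le (sub_nonneg.mpr h)) (sub_nonneg.mpr hX₁)]

section LogisticDelay

variable {βt βs γs : ℝ} {f : ℝ → ℝ}

theorem logisticDelay_pos (hfcont : ContinuousOn f (Ici (-1)))
    (hde : ∀ t : ℝ, 0 < t → HasDerivAt f (βt * f t * (1 - βs * f t - γs * f (t - 1))) t)
    (hinit : ∀ t ∈ Icc (-1 : ℝ) 0, 0 < f t) {t : ℝ} (ht : -1 ≤ t) : 0 < f t := by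
  rcases le_or_gt t 0 with ht₀ | ht₀
  · exact hinit t ⟨ht, ht₀⟩
  have hsub : Icc 0 t ⊆ Ici (-1) := fun x hx => by simp only [mem_Ici]; linarith [hx.1]
  have hdelay : ContinuousOn (fun x => f (x - 1)) (Icc 0 t) :=
    hfcont.comp (by fun_prop) fun x hx => by simp only [mem_Ici]; linarith [hx.1]
  refine pos_of_hasDerivAt_mul_self (g := fun x => βt * (1 - βs * f x - γs * f (x - 1)))
    (hfcont.mono hsub) ?_ (hinit 0 (by norm_num)) (fun x hx => (hde x hx.1).congr_deriv (by ring))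
    t (right_mem_Icc.mpr ht₀.le)
  exact continuousOn_const.mul ((continuousOn_const.sub
    (continuousOn_const.mul (hfcont.mono hsub))).sub (continuousOn_const.mul hdelay))

theorem logisticDelay_inv_sub_gt (hβt : 0 < βt) (hγs : 0 < γs)
    (hfcont : ContinuousOn f (Ici (-1)))
    (hde : ∀ t : ℝ, 0 < t → HasDerivAt f (βt * f t * (1 - βs * f t - γs * f (t - 1))) t)
    (hinit : ∀ t ∈ Icc (-1 : ℝ) 0, 0 < f t) {t : ℝ} (ht : 0 < t) :
    ((f 0)⁻¹ - βs) * exp (-βt * t) < (f t)⁻¹ - βs := by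
  have hf {x : ℝ} (hx : -1 ≤ x) : 0 < f x := logisticDelay_pos hfcont hde hinit hx
  have hu : ContinuousOn (fun x => (f x)⁻¹ - βs) (Icc 0 t) :=
    ((hfcont.mono fun x hx => by simp only [mem_Ici]; linarith [hx.1]).inv₀
      fun x hx => (hf (by linarith [hx.1])).ne').sub continuousOn_const
  have hu' : ∀ x ∈ Ioo 0 t, HasDerivAt (fun x => (f x)⁻¹ - βs)
      (-βt * ((f x)⁻¹ - βs) + βt * γs * f (x - 1) / f x) x := fun x hx => by
    have hfx := (hf (by linarith [hx.1] : -1 ≤ x)).ne'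
    exact (((hde x hx.1).inv hfx).sub_const βs).congr_deriv (by field_simp; ring)
  have hgt : ∀ x ∈ Ioo 0 t, -βt * ((f x)⁻¹ - βs) <
      -βt * ((f x)⁻¹ - βs) + βt * γs * f (x - 1) / f x := fun x hx => by
    have := hf (by linarith [hx.1] : -1 ≤ x - 1)
    have := hf (by linarith [hx.1] : -1 ≤ x)
    simp only [lt_add_iff_pos_right]
    positivity
  simpa only [sub_zero, neg_mul] using mul_exp_lt_of_hasDerivAt_gt ht hu hu' hgt

end LogisticDelay

theorem stmt_17_general (βt βs γs : ℝ) (hβt : 0 < βt) (hβs : 0 < βs) (hγs : 0 < γs)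
    (φ f : ℝ → ℝ)
    (hφpos : ∀ t ∈ Set.Icc (-1 : ℝ) 0, 0 < φ t)
    (hfcont : ContinuousOn f (Set.Ici (-1 : ℝ)))
    (hde : ∀ t : ℝ, 0 < t →
      HasDerivAt f (βt * f t * (1 - βs * f t - γs * f (t - 1))) t)
    (hinit : ∀ t ∈ Set.Icc (-1 : ℝ) 0, f t = φ t) :
    ∀ t : ℝ, 0 < t →
      (0 < f t ∧
        f t < f 0 / (βs * f 0 + (1 - βs * f 0) * Real.exp (-βt * t)) ∧
        f t < max (f 0) (1 / βs)) := by
  intro t ht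
  have hinit_pos : ∀ t ∈ Icc (-1 : ℝ) 0, 0 < f t := fun t ht => hinit t ht ▸ hφpos t ht
  have hf₀ : 0 < f 0 := hinit_pos 0 (by norm_num)
  have hft : 0 < f t := logisticDelay_pos hfcont hde hinit_pos (by linarith)
  have hX₁ : exp (-βt * t) ≤ 1 := exp_le_one_iff.mpr (by nlinarith)
  have hbound := lt_div_of_inv_sub_gt hft hf₀ hβs.le (exp_pos _) hX₁
    (logisticDelay_inv_sub_gt hβt hγs hfcont hde hinit_pos ht)
  exact ⟨hft, hbound, hbound.trans_le (div_le_max_of_convex_combination hf₀ hβs (exp_pos _).le hX₁)⟩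

theorem stmt_17 (βt βs γs : ℝ) (hβt : 0 < βt) (hβs : 0 < βs) (hγs : 0 < γs)
    (hsum : βs + γs = 1)
    (φ f : ℝ → ℝ)
    (hφcont : ContinuousOn φ (Set.Icc (-1 : ℝ) 0))
    (hφpos : ∀ t ∈ Set.Icc (-1 : ℝ) 0, 0 < φ t)
    (hfcont : ContinuousOn f (Set.Ici (-1 : ℝ)))
    (hde : ∀ t : ℝ, 0 < t →
      HasDerivAt f (βt * f t * (1 - βs * f t - γs * f (t - 1))) t)
    (hinit : ∀ t ∈ Set.Icc (-1 : ℝ) 0, f t = φ t) :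
    ∀ t : ℝ, 0 < t →
      (0 < f t ∧
        f t < f 0 / (βs * f 0 + (1 - βs * f 0) * Real.exp (-βt * t)) ∧
        f t < max (f 0) (1 / βs)) :=
  stmt_17_general βt βs γs hβt hβs hγs φ f hφpos hfcont hde hinit
end

section
/- Uniqueness of nonzero asymptotic equilibrium: under the hypotheses of the positivity theorem, if the limit f_∞ = lim_{t→∞} f(t) exists, then f_∞ = 1. -/
/-!
Along a solution, `f' = f · g` with `g` continuous, so the integrating factor
`f(t) = f(0) · exp (∫₀ᵗ g)` keeps `f` positive. If `f → f∞`, then `f'(t)` tends to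
`β̃ f∞ (1 - f∞)` (using `β* + γ* = 1`), and a derivative with a limit must have limit `0`,
since `f(n + 1) - f(n) → 0` is a value of `f'` by the mean value theorem.
Finally `f∞ = 0` is impossible: once `f(t), f(t - 1) < 1`, the positive function `f` is
nondecreasing.
-/

open Real Set Filter Topology

theorem mul_exp_neg_integral_eq_of_hasDerivAt_mul {f g : ℝ → ℝ} {a b : ℝ} (hab : a ≤ b)
    (hf : ContinuousOn f (Icc a b)) (hg : ContinuousOn g (Icc a b))
    (hderiv : ∀ t ∈ Ioo a b, HasDerivAt f (f t * g t) t) :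
    f b * exp (-∫ x in a..b, g x) = f a := by
  rcases hab.eq_or_lt with rfl | hab
  · simp
  set G : ℝ → ℝ := fun u => ∫ x in a..u, g x
  have hG_deriv : ∀ t ∈ Ioo a b, HasDerivAt G (g t) t := fun t ht =>
    intervalIntegral.integral_hasDerivAt_right
      ((hg.mono (uIcc_of_le ht.1.le ▸ Icc_subset_Icc_right ht.2.le)).intervalIntegrable)
      ((hg.mono Ioo_subset_Icc_self).stronglyMeasurableAtFilter isOpen_Ioo t ht)
      (hg.continuousAt (Icc_mem_nhds ht.1 ht.2))
  have hG_cont : ContinuousOn G (Icc a b) := by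
    have := intervalIntegral.continuousOn_primitive_interval (μ := MeasureTheory.volume)
      (by rw [uIcc_of_le hab.le]; exact hg.integrableOn_Icc)
    rwa [uIcc_of_le hab.le] at this
  have h_deriv : ∀ t ∈ Ioo a b, HasDerivAt (fun u => f u * exp (-G u)) 0 t := by
    intro t ht
    have hexp : HasDerivAt (fun u => exp (-G u)) (exp (-G t) * -g t) t :=
      (hG_deriv t ht).neg.exp
    have hprod : HasDerivAt (fun u => f u * exp (-G u))
        (f t * g t * exp (-G t) + f t * (exp (-G t) * -g t)) t := (hderiv t ht).mul hexp
    rwa [show f t * g t * exp (-G t) + f t * (exp (-G t) * -g t) = 0 by ring] at hprod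
  have h_cont : ContinuousOn (fun u => f u * exp (-G u)) (Icc a b) := hf.mul hG_cont.neg.rexp
  obtain ⟨c, -, hc⟩ := exists_hasDerivAt_eq_slope _ _ hab h_cont h_deriv
  rw [eq_comm, div_eq_zero_iff, sub_eq_zero] at hc
  simpa [G] using hc.resolve_right (sub_ne_zero.2 hab.ne')

theorem pos_of_hasDerivAt_mul {f g : ℝ → ℝ} {a b : ℝ} (hab : a ≤ b)
    (hf : ContinuousOn f (Icc a b)) (hg : ContinuousOn g (Icc a b))
    (hderiv : ∀ t ∈ Ioo a b, HasDerivAt f (f t * g t) t) (ha : 0 < f a) : 0 < f b := by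
  have := mul_exp_neg_integral_eq_of_hasDerivAt_mul hab hf hg hderiv
  exact pos_of_mul_pos_left (this ▸ ha) (exp_pos _).le

theorem eq_zero_of_tendsto_of_tendsto_deriv {f f' : ℝ → ℝ} {L M : ℝ}
    (hderiv : ∀ᶠ t in atTop, HasDerivAt f (f' t) t) (hf : Tendsto f atTop (𝓝 L))
    (hf' : Tendsto f' atTop (𝓝 M)) : M = 0 := by
  obtain ⟨T, hT⟩ := eventually_atTop.1 hderiv
  have hmvt : ∀ n : ℕ, ∃ c ∈ Ioo (T + n) (T + n + 1), f' c = f (T + n + 1) - f (T + n) := by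
    intro n
    have hsub : ∀ {t}, T + n ≤ t → T ≤ t := fun ht => le_trans (by simp) ht
    obtain ⟨c, hc, hc_eq⟩ := exists_hasDerivAt_eq_slope f f' (lt_add_one (T + n))
      (fun t ht => (hT t (hsub ht.1)).continuousAt.continuousWithinAt)
      (fun t ht => hT t (hsub ht.1.le))
    exact ⟨c, hc, by simpa using hc_eq⟩
  choose c hc hc_eq using hmvt
  have hT_add : Tendsto (fun n : ℕ => T + n) atTop atTop :=
    tendsto_atTop_add_const_left _ T tendsto_natCast_atTop_atTop
  have hc_top : Tendsto c atTop atTop := tendsto_atTop_mono (fun n => (hc n).1.le) hT_add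
  have hslope : Tendsto (fun n : ℕ => f (T + n + 1) - f (T + n)) atTop (𝓝 (L - L)) :=
    (hf.comp (tendsto_atTop_add_const_right _ 1 hT_add)).sub (hf.comp hT_add)
  rw [sub_self] at hslope
  exact tendsto_nhds_unique (hf'.comp hc_top) (hslope.congr fun n => (hc_eq n).symm)

theorem not_tendsto_zero_of_deriv_nonneg {f f' : ℝ → ℝ} {T : ℝ}
    (hderiv : ∀ t ≥ T, HasDerivAt f (f' t) t) (hf' : ∀ t ≥ T, 0 ≤ f' t) (hT : 0 < f T) :
    ¬Tendsto f atTop (𝓝 0) := by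
  intro hf
  have hmono : MonotoneOn f (Ici T) := by
    refine monotoneOn_of_hasDerivWithinAt_nonneg (f' := f') (convex_Ici T)
      (fun t ht => (hderiv t ht).continuousAt.continuousWithinAt) (fun t ht => ?_) fun t ht => ?_
    all_goals rw [interior_Ici] at ht
    · exact (hderiv t (le_of_lt ht)).hasDerivWithinAt
    · exact hf' t (le_of_lt ht)
  have : f T ≤ 0 :=
    ge_of_tendsto hf (eventually_atTop.2 ⟨T, fun t ht => hmono self_mem_Ici ht ht⟩)
  linarith

section DelayLogistic

variable {βt βs γs : ℝ} {f : ℝ → ℝ}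

theorem delayLogistic_pos {φ : ℝ → ℝ} (hφpos : ∀ t ∈ Icc (-1 : ℝ) 0, 0 < φ t)
    (hfcont : ContinuousOn f (Ici (-1 : ℝ)))
    (hde : ∀ t : ℝ, 0 < t → HasDerivAt f (βt * f t * (1 - βs * f t - γs * f (t - 1))) t)
    (hinit : ∀ t ∈ Icc (-1 : ℝ) 0, f t = φ t) (t : ℝ) (ht : -1 ≤ t) : 0 < f t := by
  rcases le_or_gt t 0 with ht0 | ht0
  · exact hinit t ⟨ht, ht0⟩ ▸ hφpos t ⟨ht, ht0⟩
  have hf : ContinuousOn f (Icc 0 t) := hfcont.mono fun s hs => mem_Ici.2 (by linarith [hs.1])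
  have hf_shift : ContinuousOn (fun s => f (s - 1)) (Icc 0 t) :=
    hfcont.comp (continuousOn_id.sub continuousOn_const) fun s hs => mem_Ici.2 (by linarith [hs.1])
  refine pos_of_hasDerivAt_mul (g := fun s => βt * (1 - βs * f s - γs * f (s - 1))) ht0.le hf
    (continuousOn_const.mul ((continuousOn_const.sub (continuousOn_const.mul hf)).sub
      (continuousOn_const.mul hf_shift))) (fun s hs => ?_) ?_
  · simpa only [mul_assoc, mul_left_comm] using hde s hs.1
  · exact hinit 0 (by norm_num) ▸ hφpos 0 (by norm_num)

theorem delayLogistic_not_tendsto_zero (hβt : 0 ≤ βt) (hβs : 0 ≤ βs) (hγs : 0 ≤ γs)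
    (hsum : βs + γs ≤ 1) (hpos : ∀ t, -1 ≤ t → 0 < f t)
    (hde : ∀ t : ℝ, 0 < t → HasDerivAt f (βt * f t * (1 - βs * f t - γs * f (t - 1))) t) :
    ¬Tendsto f atTop (𝓝 0) := by
  intro hlim
  have hlim_shift : Tendsto (fun t => f (t - 1)) atTop (𝓝 0) :=
    hlim.comp (tendsto_atTop_add_const_right _ (-1) tendsto_id)
  obtain ⟨T, hT⟩ := eventually_atTop.1 <| (eventually_gt_atTop 0).and <|
    (hlim.eventually (gt_mem_nhds one_pos)).and (hlim_shift.eventually (gt_mem_nhds one_pos))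
  refine not_tendsto_zero_of_deriv_nonneg (T := T) (fun t ht => hde t (hT t ht).1)
    (fun t ht => ?_) (hpos T (by linarith [(hT T le_rfl).1])) hlim
  obtain ⟨ht0, hft, hft_shift⟩ := hT t ht
  have hlogistic : 0 ≤ 1 - βs * f t - γs * f (t - 1) := by
    nlinarith [mul_le_mul_of_nonneg_left hft.le hβs, mul_le_mul_of_nonneg_left hft_shift.le hγs]
  exact mul_nonneg (mul_nonneg hβt (hpos t (by linarith)).le) hlogistic

end DelayLogistic

theorem stmt_18_general (βt βs γs : ℝ) (hβt : 0 < βt) (hβs : 0 < βs) (hγs : 0 < γs)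
    (hsum : βs + γs = 1)
    (φ f : ℝ → ℝ) (finf : ℝ)
    (hφpos : ∀ t ∈ Set.Icc (-1 : ℝ) 0, 0 < φ t)
    (hfcont : ContinuousOn f (Set.Ici (-1 : ℝ)))
    (hde : ∀ t : ℝ, 0 < t →
      HasDerivAt f (βt * f t * (1 - βs * f t - γs * f (t - 1))) t)
    (hinit : ∀ t ∈ Set.Icc (-1 : ℝ) 0, f t = φ t)
    (hlim : Filter.Tendsto f Filter.atTop (nhds finf)) :
    finf = 1 := by
  have hpos := delayLogistic_pos hφpos hfcont hde hinit
  have hne : finf ≠ 0 := by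
    rintro rfl
    exact delayLogistic_not_tendsto_zero hβt.le hβs.le hγs.le hsum.le hpos hde hlim
  have hlim_shift : Tendsto (fun t => f (t - 1)) atTop (𝓝 finf) :=
    hlim.comp (tendsto_atTop_add_const_right _ (-1) tendsto_id)
  have hderiv_lim : Tendsto (fun t => βt * f t * (1 - βs * f t - γs * f (t - 1))) atTop
      (𝓝 (βt * finf * (1 - βs * finf - γs * finf))) :=
    (tendsto_const_nhds.mul hlim).mul ((tendsto_const_nhds.sub (tendsto_const_nhds.mul hlim)).sub
      (tendsto_const_nhds.mul hlim_shift))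
  have hequilibrium := eq_zero_of_tendsto_of_tendsto_deriv
    ((eventually_gt_atTop 0).mono hde) hlim hderiv_lim
  have : βt * finf * (1 - finf) = 0 := by linear_combination hequilibrium + βt * finf ^ 2 * hsum
  linarith [(mul_eq_zero.1 this).resolve_left (mul_ne_zero hβt.ne' hne)]

theorem stmt_18 (βt βs γs : ℝ) (hβt : 0 < βt) (hβs : 0 < βs) (hγs : 0 < γs)
    (hsum : βs + γs = 1)
    (φ f : ℝ → ℝ) (finf : ℝ)
    (hφcont : ContinuousOn φ (Set.Icc (-1 : ℝ) 0))
    (hφpos : ∀ t ∈ Set.Icc (-1 : ℝ) 0, 0 < φ t)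
    (hfcont : ContinuousOn f (Set.Ici (-1 : ℝ)))
    (hde : ∀ t : ℝ, 0 < t →
      HasDerivAt f (βt * f t * (1 - βs * f t - γs * f (t - 1))) t)
    (hinit : ∀ t ∈ Set.Icc (-1 : ℝ) 0, f t = φ t)
    (hlim : Filter.Tendsto f Filter.atTop (nhds finf)) :
    finf = 1 :=
  stmt_18_general βt βs γs hβt hβs hγs hsum φ f finf hφpos hfcont hde hinit hlim
end
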